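/- (Mean-zero property of the efficient influence function of Theorem 2.) Let Δμ_N and Δμ_C be versions of E[ΔY ∣ G=N, X] and E[ΔY ∣ G=C, X], and define ψ_δ := (e_T(X)/p_T)·(1{G=N}/e_N(X))·(ΔY − Δμ_N(X)) + (1{G=T}/p_T)·Δμ_N(X) − [ (e_T(X)/p_T)·(1{G=C}/e_C(X))·(ΔY − Δμ_C(X)) + (1{G=T}/p_T)·Δμ_C(X) ] − (1{G=T}/p_T)·δ, where δ := E[(Y₁^{(1,1)} − Y₁^{(1,0)})·1{G=T}]/p_T. Under consistency of the potential outcomes and Assumptions (A5) and (A6), ψ_δ is integrable and E[ψ_δ] = 0. -/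

import Mathlib

/-!
By the tower property, with `e_g(X) = E[1{G=g} ∣ X]`, each inverse-propensity weighted residual
`(e_T/p_T)(1{G=g}/e_g)(ΔY - Δμ_g)` has mean zero and `E[1{G=T} Δμ_g(X)] = E[e_T(X) Δμ_g(X)]`.
Hence `p_T E[ψ_δ] = E[e_T (Δμ_N - Δμ_C)] - E[(Y₁^{(1,1)} - Y₁^{(1,0)}) 1{G=T}]`. By consistency,
`Δμ_N` splits into the spillover `E[Y₁^{(0,1)} - Y₁^{(0,0)} ∣ N, X]` plus the trend
`E[Y₁^{(0,0)} - Y₀^{(0,0)} ∣ N, X]`, and `Δμ_C` is the trend on `C`. (A6) cancels the trends and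
(A5) turns the spillover into `-E[Y₁^{(1,0)} - Y₁^{(1,1)} ∣ T, X]`, whose `e_T`-weighted mean is
`E[(Y₁^{(1,1)} - Y₁^{(1,0)}) 1{G=T}]`.
-/

open MeasureTheory ProbabilityTheory Filter Topology

/-- Group label: `T` = treated (`g(A)=(1,0)`), `N` = neighboring control (`g(A)=(0,1)`),
`C` = non-neighboring control (`g(A)=(0,0)`). -/
inductive GLabel : Type
  | T | N | C
  deriving DecidableEq

instance : MeasurableSpace GLabel := ⊤

/-- The σ-algebra `𝔛` generated by the covariates `X`. -/
def sigmaX {Ω : Type} {q : ℕ} (X : Ω → (Fin q → ℝ)) : MeasurableSpace Ω :=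
  MeasurableSpace.comap X inferInstance

/-- The indicator `1{G = g}` as a real-valued function. -/
def indG {Ω : Type} (G : Ω → GLabel) (g : GLabel) (ω : Ω) : ℝ :=
  if G ω = g then 1 else 0

/-- `f` is a version of the conditional expectation `E[Z ∣ G = g, X]`:
it is measurable and `E[Z·1{G=g} ∣ 𝔛] = f(X)·e_g(X)` `P`-a.s. -/
def IsCondVersion {Ω : Type} [MeasurableSpace Ω] (P : Measure Ω) {q : ℕ}
    (X : Ω → (Fin q → ℝ)) (G : Ω → GLabel) (e : GLabel → (Fin q → ℝ) → ℝ)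
    (g : GLabel) (Z : Ω → ℝ) (f : (Fin q → ℝ) → ℝ) : Prop :=
  Measurable f ∧
    P[(fun ω => Z ω * indG G g ω) | sigmaX X] =ᵐ[P] (fun ω => f (X ω) * e g (X ω))


section CondExp

variable {Ω : Type*} {m m₀ : MeasurableSpace Ω} {μ : Measure Ω}

theorem integral_mul_eq_of_condExp_ae_eq (hm : m ≤ m₀) [SigmaFinite (μ.trim hm)]
    {b Z w : Ω → ℝ} (hb : StronglyMeasurable[m] b) (hZ : Integrable Z μ)
    (hbZ : Integrable (b * Z) μ) (hw : μ[Z | m] =ᵐ[μ] w) :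
    ∫ ω, b ω * Z ω ∂μ = ∫ ω, b ω * w ω ∂μ :=
  calc ∫ ω, b ω * Z ω ∂μ = ∫ ω, μ[b * Z | m] ω ∂μ := (integral_condExp hm).symm
    _ = ∫ ω, b ω * w ω ∂μ := integral_congr_ae <|
        (condExp_mul_of_stronglyMeasurable_left hb hbZ hZ).trans (EventuallyEq.rfl.mul hw)

theorem MeasureTheory.Integrable.of_mul_of_le {f c : Ω → ℝ} {ε : ℝ} (hε : 0 < ε) (hc : ∀ ω, ε ≤ c ω)
    (hf : AEStronglyMeasurable f μ) (hfc : Integrable (fun ω => f ω * c ω) μ) :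
    Integrable f μ := by
  refine (hfc.norm.const_mul ε⁻¹).mono' hf (ae_of_all _ fun ω => ?_)
  rw [norm_mul, Real.norm_of_nonneg (hε.trans_le (hc ω)).le, inv_mul_eq_div, le_div_iff₀ hε]
  exact mul_le_mul_of_nonneg_left (hc ω) (norm_nonneg _)

end CondExp

theorem indG_eq_indicator {Ω : Type} (G : Ω → GLabel) (g : GLabel) :
    indG G g = {ω | G ω = g}.indicator 1 := by
  ext ω
  simp [indG, Set.indicator]

theorem norm_indG_le {Ω : Type} (G : Ω → GLabel) (g : GLabel) (ω : Ω) : ‖indG G g ω‖ ≤ 1 := by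
  unfold indG
  split_ifs <;> simp

/-- The doubly robust score for `E[E[Z ∣ G = g, X] ∣ G = T]` when `p = P(G = T)`. -/
noncomputable def drScore {Ω : Type} {q : ℕ} (X : Ω → (Fin q → ℝ)) (G : Ω → GLabel)
    (e : GLabel → (Fin q → ℝ) → ℝ) (p : ℝ) (g : GLabel) (Z : Ω → ℝ) (f : (Fin q → ℝ) → ℝ)
    (ω : Ω) : ℝ :=
  e GLabel.T (X ω) / p * (indG G g ω / e g (X ω)) * (Z ω - f (X ω))
    + indG G GLabel.T ω / p * f (X ω)

section Groups

variable {Ω : Type} [MeasurableSpace Ω] {P : Measure Ω} {q : ℕ} {X : Ω → (Fin q → ℝ)}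
  {G : Ω → GLabel} {e : GLabel → (Fin q → ℝ) → ℝ} {g : GLabel}

theorem measurableSet_eq_group (hG : Measurable G) (g : GLabel) :
    MeasurableSet {ω | G ω = g} :=
  hG (measurableSet_singleton g)

theorem measurable_indG (hG : Measurable G) (g : GLabel) : Measurable (indG G g) := by
  rw [indG_eq_indicator]
  exact measurable_one.indicator (measurableSet_eq_group hG g)

theorem integral_indG (hG : Measurable G) (g : GLabel) :
    ∫ ω, indG G g ω ∂P = P.real {ω | G ω = g} := by
  rw [indG_eq_indicator, integral_indicator_one (measurableSet_eq_group hG g)]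

theorem MeasureTheory.Integrable.mul_indG (hG : Measurable G) {Z : Ω → ℝ} (hZ : Integrable Z P)
    (g : GLabel) :
    Integrable (fun ω => Z ω * indG G g ω) P :=
  hZ.mul_bdd (measurable_indG hG g).aestronglyMeasurable (ae_of_all _ (norm_indG_le G g))

theorem integrable_indG [IsFiniteMeasure P] (hG : Measurable G) (g : GLabel) :
    Integrable (indG G g) P := by
  simpa using (integrable_const (1 : ℝ)).mul_indG (P := P) hG g

theorem IsCondVersion.integral_mul [IsFiniteMeasure P] (hX : Measurable X) {Z : Ω → ℝ}
    {f : (Fin q → ℝ) → ℝ} (h : IsCondVersion P X G e g Z f) :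
    ∫ ω, f (X ω) * e g (X ω) ∂P = ∫ ω, Z ω * indG G g ω ∂P := by
  have hle : sigmaX X ≤ ‹MeasurableSpace Ω› := hX.comap_le
  rw [← integral_congr_ae h.2, integral_condExp hle]

theorem IsCondVersion.integrable_comp (hX : Measurable X) {Z : Ω → ℝ}
    {f : (Fin q → ℝ) → ℝ} (h : IsCondVersion P X G e g Z f) {ε : ℝ} (hε : 0 < ε)
    (hpos : ∀ x, ε ≤ e g x) : Integrable (fun ω => f (X ω)) P :=
  Integrable.of_mul_of_le hε (fun ω => hpos (X ω)) (h.1.comp hX).aestronglyMeasurable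
    (integrable_condExp.congr h.2)

theorem IsCondVersion.add (hG : Measurable G) {Z₁ Z₂ : Ω → ℝ} {f₁ f₂ : (Fin q → ℝ) → ℝ}
    (h₁ : IsCondVersion P X G e g Z₁ f₁) (h₂ : IsCondVersion P X G e g Z₂ f₂)
    (hZ₁ : Integrable Z₁ P) (hZ₂ : Integrable Z₂ P) :
    IsCondVersion P X G e g (fun ω => Z₁ ω + Z₂ ω) (fun x => f₁ x + f₂ x) := by
  refine ⟨h₁.1.add h₂.1, ?_⟩
  have hsplit : (fun ω => (Z₁ ω + Z₂ ω) * indG G g ω)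
      = (fun ω => Z₁ ω * indG G g ω) + fun ω => Z₂ ω * indG G g ω := by
    ext ω
    simp only [Pi.add_apply]
    ring
  rw [hsplit]
  refine (condExp_add (hZ₁.mul_indG hG g) (hZ₂.mul_indG hG g) _).trans
    ((h₁.2.add h₂.2).trans (ae_of_all _ fun ω => ?_))
  simp only [Pi.add_apply]
  ring

theorem IsCondVersion.comp_ae_eq {Z Z' : Ω → ℝ} {f f' : (Fin q → ℝ) → ℝ}
    (h : IsCondVersion P X G e g Z f) (h' : IsCondVersion P X G e g Z' f')
    (hZ : ∀ᵐ ω ∂P, G ω = g → Z ω = Z' ω) (he : ∀ x, 0 < e g x) :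
    ∀ᵐ ω ∂P, f (X ω) = f' (X ω) := by
  have hZg : (fun ω => Z ω * indG G g ω) =ᵐ[P] fun ω => Z' ω * indG G g ω := by
    filter_upwards [hZ] with ω hω
    by_cases hg : G ω = g
    · rw [hω hg]
    · simp [indG, hg]
  filter_upwards [h.2.symm.trans ((condExp_congr_ae hZg).trans h'.2)] with ω hω
  exact mul_right_cancel₀ (he _).ne' hω

theorem IsCondVersion.integrable_comp_mul (hX : Measurable X) {Z : Ω → ℝ}
    {f : (Fin q → ℝ) → ℝ} (hf : IsCondVersion P X G e g Z f) {ε : ℝ} (hε : 0 < ε)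
    (hpos : ∀ g x, ε ≤ e g x) {g' : GLabel} (he : Measurable (e g')) (he1 : ∀ x, e g' x ≤ 1) :
    Integrable (fun ω => f (X ω) * e g' (X ω)) P :=
  (hf.integrable_comp hX hε (hpos g)).mul_bdd (he.comp hX).aestronglyMeasurable <|
    ae_of_all _ fun ω => by
      rw [Real.norm_of_nonneg (hε.trans_le (hpos g' (X ω))).le]
      exact he1 (X ω)

theorem integrable_and_integral_mul_indG_mul_sub_eq_zero [IsFiniteMeasure P]
    (hX : Measurable X) (hG : Measurable G)
    (hprop : P[(fun ω => indG G g ω) | sigmaX X] =ᵐ[P] fun ω => e g (X ω))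
    {w : (Fin q → ℝ) → ℝ} (hw : Measurable w) {C : ℝ} (hwC : ∀ x, ‖w x‖ ≤ C)
    {Z : Ω → ℝ} (hZ : Integrable Z P) {f : (Fin q → ℝ) → ℝ} (hf : IsCondVersion P X G e g Z f)
    (hfi : Integrable (fun ω => f (X ω)) P) :
    Integrable (fun ω => w (X ω) * indG G g ω * (Z ω - f (X ω))) P ∧
      ∫ ω, w (X ω) * indG G g ω * (Z ω - f (X ω)) ∂P = 0 := by
  have hle : sigmaX X ≤ ‹MeasurableSpace Ω› := hX.comap_le
  have hwX : StronglyMeasurable[sigmaX X] fun ω => w (X ω) :=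
    (hw.comp (comap_measurable X)).stronglyMeasurable
  have hfX : StronglyMeasurable[sigmaX X] fun ω => f (X ω) :=
    (hf.1.comp (comap_measurable X)).stronglyMeasurable
  have hZg := hZ.mul_indG hG g
  have hwZ : Integrable (fun ω => w (X ω) * (Z ω * indG G g ω)) P :=
    hZg.bdd_mul (hw.comp hX).aestronglyMeasurable (ae_of_all _ fun ω => hwC (X ω))
  have hwf : Integrable (fun ω => w (X ω) * f (X ω) * indG G g ω) P :=
    (hfi.bdd_mul (hw.comp hX).aestronglyMeasurable
      (ae_of_all _ fun ω => hwC (X ω))).mul_indG hG g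
  have hsplit : (fun ω => w (X ω) * indG G g ω * (Z ω - f (X ω)))
      = fun ω => w (X ω) * (Z ω * indG G g ω) - w (X ω) * f (X ω) * indG G g ω := by
    ext ω
    ring
  rw [hsplit, integral_sub hwZ hwf, sub_eq_zero]
  refine ⟨hwZ.sub hwf, ?_⟩
  calc ∫ ω, w (X ω) * (Z ω * indG G g ω) ∂P
      = ∫ ω, w (X ω) * (f (X ω) * e g (X ω)) ∂P :=
        integral_mul_eq_of_condExp_ae_eq hle hwX hZg hwZ hf.2
    _ = ∫ ω, w (X ω) * f (X ω) * e g (X ω) ∂P := by simp_rw [mul_assoc]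
    _ = ∫ ω, w (X ω) * f (X ω) * indG G g ω ∂P :=
        (integral_mul_eq_of_condExp_ae_eq hle (hwX.mul hfX) (integrable_indG hG g) hwf hprop).symm

theorem integrable_drScore_and_integral [IsFiniteMeasure P] (hX : Measurable X)
    (hG : Measurable G) (he : ∀ g, Measurable (e g)) (heT1 : ∀ x, e GLabel.T x ≤ 1)
    (hprop : ∀ g : GLabel,
      P[(fun ω => indG G g ω) | sigmaX X] =ᵐ[P] (fun ω => e g (X ω)))
    {ε : ℝ} (hε : 0 < ε) (hpos : ∀ g x, ε ≤ e g x) (p : ℝ) {Z : Ω → ℝ} (hZ : Integrable Z P)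
    {f : (Fin q → ℝ) → ℝ} (hf : IsCondVersion P X G e g Z f) :
    Integrable (drScore X G e p g Z f) P ∧
      ∫ ω, drScore X G e p g Z f ω ∂P = (∫ ω, f (X ω) * e GLabel.T (X ω) ∂P) / p := by
  have hle : sigmaX X ≤ ‹MeasurableSpace Ω› := hX.comap_le
  have hfi := hf.integrable_comp hX hε (hpos g)
  have hwC (x : Fin q → ℝ) : ‖e GLabel.T x / p / e g x‖ ≤ 1 / |p| / ε := by
    rw [Real.norm_eq_abs, abs_div, abs_div, abs_of_pos (hε.trans_le (hpos _ x)),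
      abs_of_pos (hε.trans_le (hpos _ x))]
    gcongr
    exacts [heT1 x, hpos g x]
  obtain ⟨hres, hres_zero⟩ := integrable_and_integral_mul_indG_mul_sub_eq_zero hX hG (hprop g)
    (w := fun x => e GLabel.T x / p / e g x) (((he GLabel.T).div_const p).div (he g)) hwC hZ hf
    hfi
  have htrt := (hfi.div_const p).mul_indG hG GLabel.T
  have hdecomp : drScore X G e p g Z f = fun ω =>
      e GLabel.T (X ω) / p / e g (X ω) * indG G g ω * (Z ω - f (X ω))
        + f (X ω) / p * indG G GLabel.T ω := by
    ext ω
    simp only [drScore]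
    ring
  refine ⟨hdecomp ▸ hres.add htrt, ?_⟩
  rw [hdecomp, integral_add hres htrt, hres_zero, zero_add,
    integral_mul_eq_of_condExp_ae_eq hle (b := fun ω => f (X ω) / p)
      ((hf.1.comp (comap_measurable X)).div_const p).stronglyMeasurable
      (integrable_indG hG GLabel.T) htrt (hprop GLabel.T), ← integral_div]
  refine integral_congr_ae (ae_of_all _ fun ω => ?_)
  simp only
  ring

theorem integral_sub_integral_eq_integral_spillover [IsFiniteMeasure P] (hX : Measurable X)
    (hG : Measurable G) (heT : Measurable (e GLabel.T)) (heT1 : ∀ x, e GLabel.T x ≤ 1)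
    {ε : ℝ} (hε : 0 < ε) (hpos : ∀ g x, ε ≤ e g x)
    {Y0 Y1 Y110 Y111 Y101 Y100 Y000 : Ω → ℝ}
    (hI01 : Integrable Y101 P) (hI00 : Integrable Y100 P) (hI000 : Integrable Y000 P)
    (hconsN : ∀ᵐ ω ∂P, G ω = GLabel.N → Y1 ω = Y101 ω)
    (hconsC : ∀ᵐ ω ∂P, G ω = GLabel.C → Y1 ω = Y100 ω)
    (hcons0 : Y0 =ᵐ[P] Y000)
    {fT fN gN gC ΔμN ΔμC : (Fin q → ℝ) → ℝ}
    (hfT : IsCondVersion P X G e GLabel.T (fun ω => Y110 ω - Y111 ω) fT)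
    (hfN : IsCondVersion P X G e GLabel.N (fun ω => Y101 ω - Y100 ω) fN)
    (hA5 : ∀ᵐ ω ∂P, fT (X ω) + fN (X ω) = 0)
    (hgN : IsCondVersion P X G e GLabel.N (fun ω => Y100 ω - Y000 ω) gN)
    (hgC : IsCondVersion P X G e GLabel.C (fun ω => Y100 ω - Y000 ω) gC)
    (hA6 : ∀ᵐ ω ∂P, gN (X ω) = gC (X ω))
    (hΔμN : IsCondVersion P X G e GLabel.N (fun ω => Y1 ω - Y0 ω) ΔμN)
    (hΔμC : IsCondVersion P X G e GLabel.C (fun ω => Y1 ω - Y0 ω) ΔμC) :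
    ∫ ω, ΔμN (X ω) * e GLabel.T (X ω) ∂P - ∫ ω, ΔμC (X ω) * e GLabel.T (X ω) ∂P
      = ∫ ω, (Y111 ω - Y110 ω) * indG G GLabel.T ω ∂P := by
  have he0 (g : GLabel) (x : Fin q → ℝ) : 0 < e g x := hε.trans_le (hpos g x)
  have hN : ∀ᵐ ω ∂P, ΔμN (X ω) = fN (X ω) + gN (X ω) := by
    refine hΔμN.comp_ae_eq (hfN.add hG hgN (hI01.sub hI00) (hI00.sub hI000)) ?_ (he0 _)
    filter_upwards [hconsN, hcons0] with ω h1 h0 hg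
    rw [h1 hg, h0]
    ring
  have hC : ∀ᵐ ω ∂P, ΔμC (X ω) = gC (X ω) := by
    refine hΔμC.comp_ae_eq hgC ?_ (he0 _)
    filter_upwards [hconsC, hcons0] with ω h1 h0 hg
    rw [h1 hg, h0]
  have hdiff : (fun ω => ΔμN (X ω) * e GLabel.T (X ω) - ΔμC (X ω) * e GLabel.T (X ω))
      =ᵐ[P] fun ω => -(fT (X ω) * e GLabel.T (X ω)) := by
    filter_upwards [hN, hC, hA5, hA6] with ω hN hC h5 h6
    rw [hN, hC, ← h6]
    linear_combination e GLabel.T (X ω) * h5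
  rw [← integral_sub (hΔμN.integrable_comp_mul hX hε hpos heT heT1)
    (hΔμC.integrable_comp_mul hX hε hpos heT heT1), integral_congr_ae hdiff, integral_neg,
    hfT.integral_mul hX, ← integral_neg]
  refine integral_congr_ae (ae_of_all _ fun ω => ?_)
  simp only
  ring

end Groups

theorem stmt_12_general
    {Ω : Type} [MeasurableSpace Ω] (P : Measure Ω) [IsProbabilityMeasure P]
    {q : ℕ} (X : Ω → (Fin q → ℝ)) (hX : Measurable X)
    (G : Ω → GLabel) (hG : Measurable G)
    (Y0 Y1 : Ω → ℝ) (hY0 : Integrable Y0 P) (hY1 : Integrable Y1 P)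
    (e : GLabel → (Fin q → ℝ) → ℝ) (he : ∀ g, Measurable (e g))
    (he1 : ∀ g x, e g x ≤ 1)
    (hprop : ∀ g : GLabel,
      P[(fun ω => indG G g ω) | sigmaX X] =ᵐ[P] (fun ω => e g (X ω)))
    (ε : ℝ) (hε : 0 < ε) (hpos : ∀ g x, ε ≤ e g x)
    (hpT : 0 < (P {ω | G ω = GLabel.T}).toReal)
    (Y110 Y111 Y101 Y100 Y000 : Ω → ℝ)
    (hI01 : Integrable Y101 P) (hI00 : Integrable Y100 P) (hI000 : Integrable Y000 P)
    (hconsN : ∀ᵐ ω ∂P, G ω = GLabel.N → Y1 ω = Y101 ω)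
    (hconsC : ∀ᵐ ω ∂P, G ω = GLabel.C → Y1 ω = Y100 ω)
    (hcons0 : Y0 =ᵐ[P] Y000)
    (fT fN : (Fin q → ℝ) → ℝ)
    (hfT : IsCondVersion P X G e GLabel.T (fun ω => Y110 ω - Y111 ω) fT)
    (hfN : IsCondVersion P X G e GLabel.N (fun ω => Y101 ω - Y100 ω) fN)
    (hA5 : ∀ᵐ ω ∂P, fT (X ω) + fN (X ω) = 0)
    (gN gC : (Fin q → ℝ) → ℝ)
    (hgN : IsCondVersion P X G e GLabel.N (fun ω => Y100 ω - Y000 ω) gN)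
    (hgC : IsCondVersion P X G e GLabel.C (fun ω => Y100 ω - Y000 ω) gC)
    (hA6 : ∀ᵐ ω ∂P, gN (X ω) = gC (X ω))
    (ΔμN ΔμC : (Fin q → ℝ) → ℝ)
    (hΔμN : IsCondVersion P X G e GLabel.N (fun ω => Y1 ω - Y0 ω) ΔμN)
    (hΔμC : IsCondVersion P X G e GLabel.C (fun ω => Y1 ω - Y0 ω) ΔμC)
    (ψ : Ω → ℝ)
    (hψ : ∀ ω, ψ ω =
      (e GLabel.T (X ω) / (P {ω | G ω = GLabel.T}).toReal) * (indG G GLabel.N ω / e GLabel.N (X ω)) *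
          ((Y1 ω - Y0 ω) - ΔμN (X ω))
        + (indG G GLabel.T ω / (P {ω | G ω = GLabel.T}).toReal) * ΔμN (X ω)
        - ((e GLabel.T (X ω) / (P {ω | G ω = GLabel.T}).toReal) * (indG G GLabel.C ω / e GLabel.C (X ω)) *
            ((Y1 ω - Y0 ω) - ΔμC (X ω))
          + (indG G GLabel.T ω / (P {ω | G ω = GLabel.T}).toReal) * ΔμC (X ω))
        - (indG G GLabel.T ω / (P {ω | G ω = GLabel.T}).toReal) *
            ((∫ ω, (Y111 ω - Y110 ω) * indG G GLabel.T ω ∂P) / (P {ω | G ω = GLabel.T}).toReal))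
    :
    Integrable ψ P ∧ ∫ ω, ψ ω ∂P = 0 := by
  set pT := (P {ω | G ω = GLabel.T}).toReal
  set J := ∫ ω, (Y111 ω - Y110 ω) * indG G GLabel.T ω ∂P
  obtain ⟨hNint, hN⟩ := integrable_drScore_and_integral hX hG he (he1 GLabel.T) hprop hε hpos pT
    (hY1.sub hY0) hΔμN
  obtain ⟨hCint, hC⟩ := integrable_drScore_and_integral hX hG he (he1 GLabel.T) hprop hε hpos pT
    (hY1.sub hY0) hΔμC
  have hTint : Integrable (fun ω => indG G GLabel.T ω / pT * (J / pT)) P :=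
    ((integrable_indG hG GLabel.T).div_const pT).mul_const (J / pT)
  have hJ := integral_sub_integral_eq_integral_spillover hX hG (he GLabel.T) (he1 GLabel.T) hε hpos
    hI01 hI00 hI000 hconsN hconsC hcons0 hfT hfN hA5 hgN hgC hA6 hΔμN hΔμC
  have hψ' : ψ = drScore X G e pT GLabel.N (Y1 - Y0) ΔμN - drScore X G e pT GLabel.C (Y1 - Y0) ΔμC
      - fun ω => indG G GLabel.T ω / pT * (J / pT) := funext hψ
  rw [hψ']
  refine ⟨(hNint.sub hCint).sub hTint, ?_⟩
  rw [integral_sub' (hNint.sub hCint) hTint, integral_sub' hNint hCint, hN, hC, integral_mul_const,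
    integral_div, integral_indG hG, ← sub_div, hJ]
  change J / pT - pT / pT * (J / pT) = 0
  rw [div_self hpT.ne', one_mul, sub_self]

theorem stmt_12
    {Ω : Type} [MeasurableSpace Ω] (P : Measure Ω) [IsProbabilityMeasure P]
    {q : ℕ} (X : Ω → (Fin q → ℝ)) (hX : Measurable X)
    (G : Ω → GLabel) (hG : Measurable G)
    (Y0 Y1 : Ω → ℝ) (hY0 : Integrable Y0 P) (hY1 : Integrable Y1 P)
    (e : GLabel → (Fin q → ℝ) → ℝ) (he : ∀ g, Measurable (e g))
    (he1 : ∀ g x, e g x ≤ 1)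
    (hprop : ∀ g : GLabel,
      P[(fun ω => indG G g ω) | sigmaX X] =ᵐ[P] (fun ω => e g (X ω)))
    (ε : ℝ) (hε : 0 < ε) (hpos : ∀ g x, ε ≤ e g x)
    (hpT : 0 < (P {ω | G ω = GLabel.T}).toReal)
    (Y110 Y111 Y101 Y100 Y000 : Ω → ℝ)
    (hI10 : Integrable Y110 P) (hI11 : Integrable Y111 P)
    (hI01 : Integrable Y101 P) (hI00 : Integrable Y100 P) (hI000 : Integrable Y000 P)
    (hconsT : ∀ᵐ ω ∂P, G ω = GLabel.T → Y1 ω = Y110 ω)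
    (hconsN : ∀ᵐ ω ∂P, G ω = GLabel.N → Y1 ω = Y101 ω)
    (hconsC : ∀ᵐ ω ∂P, G ω = GLabel.C → Y1 ω = Y100 ω)
    (hcons0 : Y0 =ᵐ[P] Y000)
    (fT fN : (Fin q → ℝ) → ℝ)
    (hfT : IsCondVersion P X G e GLabel.T (fun ω => Y110 ω - Y111 ω) fT)
    (hfN : IsCondVersion P X G e GLabel.N (fun ω => Y101 ω - Y100 ω) fN)
    (hA5 : ∀ᵐ ω ∂P, fT (X ω) + fN (X ω) = 0)
    (gN gC : (Fin q → ℝ) → ℝ)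
    (hgN : IsCondVersion P X G e GLabel.N (fun ω => Y100 ω - Y000 ω) gN)
    (hgC : IsCondVersion P X G e GLabel.C (fun ω => Y100 ω - Y000 ω) gC)
    (hA6 : ∀ᵐ ω ∂P, gN (X ω) = gC (X ω))
    (ΔμN ΔμC : (Fin q → ℝ) → ℝ)
    (hΔμN : IsCondVersion P X G e GLabel.N (fun ω => Y1 ω - Y0 ω) ΔμN)
    (hΔμC : IsCondVersion P X G e GLabel.C (fun ω => Y1 ω - Y0 ω) ΔμC)
    (ψ : Ω → ℝ)
    (hψ : ∀ ω, ψ ω =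
      (e GLabel.T (X ω) / (P {ω | G ω = GLabel.T}).toReal) * (indG G GLabel.N ω / e GLabel.N (X ω)) *
          ((Y1 ω - Y0 ω) - ΔμN (X ω))
        + (indG G GLabel.T ω / (P {ω | G ω = GLabel.T}).toReal) * ΔμN (X ω)
        - ((e GLabel.T (X ω) / (P {ω | G ω = GLabel.T}).toReal) * (indG G GLabel.C ω / e GLabel.C (X ω)) *
            ((Y1 ω - Y0 ω) - ΔμC (X ω))
          + (indG G GLabel.T ω / (P {ω | G ω = GLabel.T}).toReal) * ΔμC (X ω))
        - (indG G GLabel.T ω / (P {ω | G ω = GLabel.T}).toReal) *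
            ((∫ ω, (Y111 ω - Y110 ω) * indG G GLabel.T ω ∂P) / (P {ω | G ω = GLabel.T}).toReal))
    :
    Integrable ψ P ∧ ∫ ω, ψ ω ∂P = 0 :=
  stmt_12_general P X hX G hG Y0 Y1 hY0 hY1 e he he1 hprop ε hε hpos hpT Y110 Y111 Y101 Y100 Y000
    hI01 hI00 hI000 hconsN hconsC hcons0 fT fN hfT hfN hA5 gN gC hgN hgC hA6 ΔμN ΔμC hΔμN hΔμC ψ hψ
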